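/- arXiv:1806.02943 — 4 statements merged into one kernel-verified Lean document; each statement's English description precedes it below -/
import Mathlib

section
/- For every partition μ contained in the staircase δ_{n−1} = (n−1, n−2, …, 1, 0), the integer 2^{binomial(n,2)} divides d_{δ_{n−1},μ} · 2^{|μ|}; that is, the coefficient d_{δ_{n−1},μ} · 2^{|μ|} / 2^{binomial(n,2)} appearing in Lascoux's Schur expansion of ∏_{1 ≤ i < j ≤ n}(1 + x_i + x_j) is a (nonnegative) integer. -/
/-- The binomial determinant `d_{λ,μ}` (partitions padded to length `n`,
`0`-indexed version of `det (C(λ_i + n − i, μ_j + n − j))_{1 ≤ i,j ≤ n}`). -/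
def binomDet (n : ℕ) (lam mu : Fin n → ℕ) : ℤ :=
  (Matrix.of fun i j : Fin n =>
    ((lam i + (n - 1 - (i : ℕ))).choose (mu j + (n - 1 - (j : ℕ))) : ℤ)).det

/-- The staircase partition `δ_{n−1} = (n−1, n−2, …, 1, 0)`, padded to length `n`. -/
def staircase (n : ℕ) : Fin n → ℕ := fun i => n - 1 - (i : ℕ)

open Polynomial Finset in
lemma key_choose (m b K : ℕ) (hm : m ≤ K) :
    ((2 * m).choose b : ℤ) =
      ∑ k ∈ Finset.range (K + 1),
        (m.choose k : ℤ) * (if k ≤ b then ((k.choose (b - k) : ℤ) * 2 ^ (2 * k - b)) else 0) := by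
  have key1 : ((2 * m).choose b : ℤ) =
      ∑ k ∈ Finset.range (m + 1),
        (m.choose k : ℤ) * (if k ≤ b then ((k.choose (b - k) : ℤ) * 2 ^ (2 * k - b)) else 0) := by
    have h1 : ((X + 1 : ℤ[X]) ^ (2 * m)).coeff b = ((2 * m).choose b : ℤ) := by
      rw [coeff_X_add_one_pow]
    rw [← h1, pow_mul]
    have h2 : (X + 1 : ℤ[X]) ^ 2 = (X ^ 2 + C 2 * X) + 1 := by
      rw [map_ofNat C 2]
      ring
    rw [h2, add_pow, finset_sum_coeff]
    apply Finset.sum_congr rfl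
    intro k _
    have h3 : (X ^ 2 + C 2 * X : ℤ[X]) ^ k = X ^ k * (X + C 2) ^ k := by
      rw [← mul_pow]; ring_nf
    rw [one_pow, mul_one, h3, ← C_eq_natCast, coeff_mul_C, mul_comm (Polynomial.X ^ k) _,
      coeff_mul_X_pow']
    split_ifs with h
    · rw [coeff_X_add_C_pow]
      by_cases h2k : b ≤ 2 * k
      · have : k - (b - k) = 2 * k - b := by omega
        rw [this]; ring
      · have h0 : k < b - k := by omega
        rw [Nat.choose_eq_zero_of_lt h0]
        simp
    · simp
  rw [key1]
  apply Finset.sum_subset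
  · exact Finset.range_subset_range.2 (by omega)
  · intro k _ hk
    have : m < k := by simp at hk; omega
    rw [Nat.choose_eq_zero_of_lt this]
    simp

open Finset in
lemma stair_sum (N : ℕ) : ∑ j : Fin N, (N - 1 - (j : ℕ)) = N.choose 2 := by
  rw [Fin.sum_univ_eq_sum_range]
  have h1 : ∑ j ∈ range N, (N - 1 - j) = ∑ j ∈ range N, j :=
    Finset.sum_range_reflect (fun j => j) N
  have h2 := Finset.sum_range_id_mul_two N
  have h3 := Nat.choose_two_right N
  omega

open Finset in
lemma fin_id_sum (N : ℕ) : ∑ j : Fin N, (j : ℕ) = N.choose 2 := by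
  rw [Fin.sum_univ_eq_sum_range (fun j => j)]
  have h2 := Finset.sum_range_id_mul_two N
  have h3 := Nat.choose_two_right N
  omega

theorem stmt5 (n : ℕ) (mu : Fin n → ℕ) (hmu : Antitone mu)
    (hsub : ∀ i, mu i ≤ staircase n i) :
    (2 : ℤ) ^ n.choose 2 ∣ binomDet n (staircase n) mu * 2 ^ (∑ i, mu i) := by
  obtain _ | m := n
  · simp [binomDet]
  set A : Matrix (Fin (m + 1)) (Fin (m + 1)) ℤ :=
    Matrix.of (fun i k : Fin (m + 1) => ((m + 1 - 1 - (i : ℕ)).choose (k : ℕ) : ℤ)) with hA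
  set B : Matrix (Fin (m + 1)) (Fin (m + 1)) ℤ :=
    Matrix.of (fun k j : Fin (m + 1) =>
      if (k : ℕ) ≤ mu j + (m + 1 - 1 - (j : ℕ)) then
        (((k : ℕ).choose (mu j + (m + 1 - 1 - (j : ℕ)) - (k : ℕ)) : ℤ) *
          2 ^ (2 * (k : ℕ) - (mu j + (m + 1 - 1 - (j : ℕ)))))
      else 0) with hB
  have hM : binomDet (m + 1) (staircase (m + 1)) mu = (A * B).det := by
    unfold binomDet
    congr 1
    ext i j
    rw [Matrix.mul_apply]
    simp only [Matrix.of_apply, hA, hB]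
    have hst : staircase (m + 1) i + (m + 1 - 1 - (i : ℕ)) = 2 * (m + 1 - 1 - (i : ℕ)) := by
      simp only [staircase]; omega
    rw [hst, key_choose (m + 1 - 1 - (i : ℕ)) (mu j + (m + 1 - 1 - (j : ℕ))) m (by omega),
      Fin.sum_univ_eq_sum_range
      (fun k => ((m + 1 - 1 - (i : ℕ)).choose k : ℤ) *
        (if k ≤ mu j + (m + 1 - 1 - (j : ℕ)) then
          ((k.choose (mu j + (m + 1 - 1 - (j : ℕ)) - k) : ℤ) *
            2 ^ (2 * k - (mu j + (m + 1 - 1 - (j : ℕ))))) else 0)) (m + 1)]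
  rw [hM, Matrix.det_mul, mul_assoc]
  refine Dvd.dvd.mul_left ?_ A.det
  -- core: 2^C(m+1,2) ∣ B.det * 2^(∑ mu)
  rw [Matrix.det_apply, Finset.sum_mul]
  apply Finset.dvd_sum
  intro σ _
  rw [Units.smul_def, zsmul_eq_mul, mul_assoc]
  apply Dvd.dvd.mul_left
  have hentry : ∀ k j : Fin (m + 1),
      (2 : ℤ) ^ (2 * (k : ℕ) - (mu j + (m + 1 - 1 - (j : ℕ)))) ∣ B k j := by
    intro k j
    simp only [hB, Matrix.of_apply]
    split
    · exact dvd_mul_left _ _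
    · exact dvd_zero _
  have hprod : (2 : ℤ) ^ (∑ i : Fin (m + 1), (2 * ((σ i : ℕ)) - (mu i + (m + 1 - 1 - (i : ℕ)))))
      ∣ ∏ i : Fin (m + 1), B (σ i) i := by
    rw [← Finset.prod_pow_eq_pow_sum]
    exact Finset.prod_dvd_prod_of_dvd _ _ (fun i _ => hentry (σ i) i)
  have hE : (m + 1).choose 2 ≤
      (∑ i : Fin (m + 1), (2 * ((σ i : ℕ)) - (mu i + (m + 1 - 1 - (i : ℕ))))) + ∑ i, mu i := by
    have hσ : ∑ i : Fin (m + 1), (((σ i : ℕ)) : ℤ) = ((m + 1).choose 2 : ℤ) := by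
      rw [Equiv.sum_comp σ (fun i : Fin (m + 1) => ((i : ℕ) : ℤ))]
      rw [← Nat.cast_sum, fin_id_sum]
    have hbsum : ∑ j : Fin (m + 1), ((mu j + (m + 1 - 1 - (j : ℕ)) : ℕ) : ℤ) =
        ((∑ i, mu i : ℕ) : ℤ) + ((m + 1).choose 2 : ℤ) := by
      rw [← Nat.cast_sum, Finset.sum_add_distrib, stair_sum]
      push_cast
      ring
    have hsum : 2 * ((m + 1).choose 2 : ℤ) -
        (((∑ i, mu i : ℕ) : ℤ) + ((m + 1).choose 2 : ℤ)) ≤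
        ((∑ i : Fin (m + 1), (2 * ((σ i : ℕ)) - (mu i + (m + 1 - 1 - (i : ℕ)))) : ℕ) : ℤ) := by
      calc 2 * ((m + 1).choose 2 : ℤ) - (((∑ i, mu i : ℕ) : ℤ) + ((m + 1).choose 2 : ℤ))
          = ∑ i : Fin (m + 1), (2 * (((σ i : ℕ)) : ℤ) -
              ((mu i + (m + 1 - 1 - (i : ℕ)) : ℕ) : ℤ)) := by
            rw [Finset.sum_sub_distrib, ← Finset.mul_sum, hσ, hbsum]
        _ ≤ ∑ i : Fin (m + 1), ((2 * ((σ i : ℕ)) - (mu i + (m + 1 - 1 - (i : ℕ))) : ℕ) : ℤ) :=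
            Finset.sum_le_sum (fun i _ => by push_cast; omega)
        _ = ((∑ i : Fin (m + 1), (2 * ((σ i : ℕ)) - (mu i + (m + 1 - 1 - (i : ℕ)))) : ℕ) : ℤ) :=
            (Nat.cast_sum _ _).symm
    omega
  obtain ⟨c, hc⟩ := hprod
  refine dvd_trans (pow_dvd_pow 2 hE) ⟨c, ?_⟩
  rw [hc, pow_add]
  ring
end

section
/- For n ≥ 2, the Boolean product polynomial B_{n,2}(x_1,…,x_n) = ∏_{1 ≤ i < j ≤ n} (x_i + x_j) equals the single Schur polynomial s_{δ_{n−1}}(x_1,…,x_n) indexed by the staircase partition δ_{n−1} = (n−1, n−2, …, 1). -/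
open MvPolynomial

/-- Complete homogeneous symmetric polynomial with integer index: `0` for negative index. -/
noncomputable def hInt (n : ℕ) (m : ℤ) : MvPolynomial (Fin n) ℚ :=
  if 0 ≤ m then hsymm (Fin n) ℚ m.toNat else 0

/-- Schur polynomial via the Jacobi–Trudi determinant. -/
noncomputable def schur (n : ℕ) (lam : Fin n → ℕ) : MvPolynomial (Fin n) ℚ :=
  (Matrix.of fun i j : Fin n => hInt n ((lam i : ℤ) - (i : ℤ) + (j : ℤ))).det

noncomputable section

namespace StmtAux

variable {n : ℕ}

/-- elementary symmetric polynomial over a finset of variables -/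
def eS (n : ℕ) (S : Finset (Fin n)) (k : ℕ) : MvPolynomial (Fin n) ℚ :=
  ∑ t ∈ S.powersetCard k, ∏ i ∈ t, X i

def hS (n : ℕ) (S : Finset (Fin n)) (m : ℕ) : MvPolynomial (Fin n) ℚ :=
  ∑ f ∈ S.sym m, (f.1.map X).prod

lemma eS_zero (S : Finset (Fin n)) : eS n S 0 = 1 := by
  simp [eS]

lemma eS_card_lt {S : Finset (Fin n)} {k : ℕ} (h : S.card < k) : eS n S k = 0 := by
  rw [eS, Finset.powersetCard_eq_empty.2 h, Finset.sum_empty]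

lemma eS_empty (k : ℕ) : eS n (∅ : Finset (Fin n)) k = if k = 0 then 1 else 0 := by
  cases k with
  | zero => simp [eS_zero]
  | succ k => rw [eS_card_lt (by simp)]; simp

lemma eS_insert {S : Finset (Fin n)} {j : Fin n} (hj : j ∉ S) (k : ℕ) :
    eS n (insert j S) (k + 1) = eS n S (k + 1) + X j * eS n S k := by
  rw [eS, Finset.powersetCard_succ_insert hj, Finset.sum_union, Finset.sum_image]
  · simp only [eS, Finset.mul_sum]
    congr 1
    refine Finset.sum_congr rfl fun t ht => ?_
    rw [Finset.prod_insert fun hjt => hj ((Finset.mem_powersetCard.1 ht).1 hjt)]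
  · intro t ht u hu htu
    have ht' : j ∉ t := fun hjt => hj ((Finset.mem_powersetCard.1 ht).1 hjt)
    have hu' : j ∉ u := fun hjt => hj ((Finset.mem_powersetCard.1 hu).1 hjt)
    have := congrArg (fun s => Finset.erase s j) htu
    simpa [Finset.erase_insert ht', Finset.erase_insert hu'] using this
  · rw [Finset.disjoint_right]
    rintro t ht hts
    obtain ⟨u, hu, rfl⟩ := Finset.mem_image.1 ht
    exact hj ((Finset.mem_powersetCard.1 hts).1 (Finset.mem_insert_self j u))

lemma hS_univ (m : ℕ) : hS n Finset.univ m = hsymm (Fin n) ℚ m := by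
  rw [hS, Finset.sym_univ, hsymm]

lemma hS_zero (S : Finset (Fin n)) : hS n S 0 = 1 := by
  rw [hS, Finset.sym_zero]; simp; rfl

lemma hS_empty (m : ℕ) : hS n (∅ : Finset (Fin n)) m = if m = 0 then 1 else 0 := by
  cases m with
  | zero => simp [hS_zero]
  | succ m => rw [hS, Finset.sym_empty]; simp

lemma hS_insert {S : Finset (Fin n)} {j : Fin n} (hj : j ∉ S) (m : ℕ) :
    hS n (insert j S) m = ∑ i : Fin (m + 1), X j ^ (i : ℕ) * hS n S (m - i) := by
  rw [hS, ← Finset.sum_coe_sort]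
  rw [← Equiv.sum_comp (Finset.symInsertEquiv hj).symm
      (fun f : ((insert j S).sym m : Finset (Sym (Fin n) m)) => ((f : Sym (Fin n) m).1.map X).prod)]
  rw [← Finset.univ_sigma_univ, Finset.sum_sigma]
  refine Finset.sum_congr rfl fun i _ => ?_
  rw [hS, ← Finset.sum_coe_sort (S.sym (m - (i:ℕ))), Finset.mul_sum]
  refine Finset.sum_congr rfl fun f _ => ?_
  simp only [Finset.symInsertEquiv_symm_apply_coe]
  change (Multiset.map X ((↑(f : Sym (Fin n) (m - (i:ℕ))) : Multiset (Fin n))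
      + Multiset.replicate (i:ℕ) j)).prod = _
  rw [Multiset.map_add, Multiset.prod_add, Multiset.map_replicate, Multiset.prod_replicate]
  exact mul_comm _ _

lemma hS_insert_succ {S : Finset (Fin n)} {j : Fin n} (hj : j ∉ S) (m : ℕ) :
    hS n (insert j S) (m + 1) = hS n S (m + 1) + X j * hS n (insert j S) m := by
  rw [hS_insert hj (m + 1), hS_insert hj m, Fin.sum_univ_eq_sum_range
    (fun i => X j ^ i * hS n S (m + 1 - i)), Finset.sum_range_succ'
    (fun i => X j ^ i * hS n S (m + 1 - i)), Fin.sum_univ_eq_sum_range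
    (fun i => X j ^ i * hS n S (m - i))]
  simp only [pow_zero, one_mul, Nat.sub_zero, pow_succ]
  rw [add_comm, Finset.mul_sum]
  congr 1
  refine Finset.sum_congr rfl fun i _ => ?_
  rw [show m + 1 - (i + 1) = m - i by omega]
  ring

lemma hps_mul_single {S : Finset (Fin n)} {j : Fin n} (hj : j ∉ S) :
    (PowerSeries.mk (hS n (insert j S))) * (1 - PowerSeries.C (R := MvPolynomial (Fin n) ℚ) (X j) * PowerSeries.X)
      = PowerSeries.mk (hS n S) := by
  refine PowerSeries.ext fun m => ?_
  rw [mul_sub, mul_one, map_sub, show (PowerSeries.mk (hS n (insert j S))) *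
      (PowerSeries.C (R := MvPolynomial (Fin n) ℚ) (X j) * PowerSeries.X) = PowerSeries.C (R := MvPolynomial (Fin n) ℚ) (X j) *
      ((PowerSeries.mk (hS n (insert j S))) * PowerSeries.X) from by ring,
    PowerSeries.coeff_C_mul]
  cases m with
  | zero => simp [PowerSeries.coeff_mk, hS_zero]
  | succ m =>
    rw [PowerSeries.coeff_succ_mul_X, PowerSeries.coeff_mk, PowerSeries.coeff_mk,
      PowerSeries.coeff_mk, hS_insert_succ hj]
    ring

lemma hps_mul_eps (S : Finset (Fin n)) :
    (PowerSeries.mk (hS n S)) * (∏ i ∈ S, (1 - PowerSeries.C (R := MvPolynomial (Fin n) ℚ) (X i) * PowerSeries.X)) = 1 := by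
  classical
  induction S using Finset.induction_on with
  | empty =>
    rw [Finset.prod_empty, mul_one]
    refine PowerSeries.ext fun m => ?_
    cases m <;> simp [hS_empty, PowerSeries.coeff_mk, PowerSeries.coeff_one]
  | @insert j S hj ih =>
    rw [Finset.prod_insert hj,
      show (PowerSeries.mk (hS n (insert j S))) * ((1 - PowerSeries.C (R := MvPolynomial (Fin n) ℚ) (X j) * PowerSeries.X) *
        (∏ i ∈ S, (1 - PowerSeries.C (R := MvPolynomial (Fin n) ℚ) (X i) * PowerSeries.X)))
      = ((PowerSeries.mk (hS n (insert j S))) * (1 - PowerSeries.C (R := MvPolynomial (Fin n) ℚ) (X j) * PowerSeries.X)) *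
        (∏ i ∈ S, (1 - PowerSeries.C (R := MvPolynomial (Fin n) ℚ) (X i) * PowerSeries.X)) from by ring,
      hps_mul_single hj, ih]

lemma geom_mul (j : Fin n) :
    (PowerSeries.mk fun m => (X j : MvPolynomial (Fin n) ℚ) ^ m) *
      (1 - PowerSeries.C (R := MvPolynomial (Fin n) ℚ) (X j) * PowerSeries.X) = 1 := by
  refine PowerSeries.ext fun m => ?_
  rw [mul_sub, mul_one, map_sub, show (PowerSeries.mk fun m => (X j : MvPolynomial (Fin n) ℚ) ^ m) *
      (PowerSeries.C (R := MvPolynomial (Fin n) ℚ) (X j) * PowerSeries.X) = PowerSeries.C (R := MvPolynomial (Fin n) ℚ) (X j) *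
      ((PowerSeries.mk fun m => (X j : MvPolynomial (Fin n) ℚ) ^ m) * PowerSeries.X) from by ring,
    PowerSeries.coeff_C_mul]
  cases m with
  | zero => simp
  | succ m =>
    rw [PowerSeries.coeff_succ_mul_X, PowerSeries.coeff_mk, PowerSeries.coeff_mk,
      PowerSeries.coeff_one]
    simp [pow_succ]
    ring

lemma hps_erase (j : Fin n) :
    (PowerSeries.mk (hS n Finset.univ)) *
      (∏ i ∈ Finset.univ.erase j, (1 - PowerSeries.C (R := MvPolynomial (Fin n) ℚ) (X i) * PowerSeries.X)) =
      PowerSeries.mk fun m => (X j : MvPolynomial (Fin n) ℚ) ^ m := by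
  set u := (1 - PowerSeries.C (R := MvPolynomial (Fin n) ℚ) (X j) * PowerSeries.X)
  set A := (PowerSeries.mk (hS n Finset.univ)) *
      (∏ i ∈ Finset.univ.erase j, (1 - PowerSeries.C (R := MvPolynomial (Fin n) ℚ) (X i) * PowerSeries.X))
  set B := PowerSeries.mk fun m => (X j : MvPolynomial (Fin n) ℚ) ^ m
  have hA : A * u = 1 := by
    have huniv : (Finset.univ : Finset (Fin n)) = insert j (Finset.univ.erase j) := by
      rw [Finset.insert_erase (Finset.mem_univ j)]
    have := hps_mul_eps (n := n) Finset.univ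
    rw [huniv, Finset.prod_insert (Finset.notMem_erase j _)] at this
    rw [show A * u = (PowerSeries.mk (hS n (insert j (Finset.univ.erase j)))) *
      (u * ∏ i ∈ Finset.univ.erase j, (1 - PowerSeries.C (R := MvPolynomial (Fin n) ℚ) (X i) * PowerSeries.X)) from by
        rw [← huniv]; ring]
    exact this
  have hB : B * u = 1 := geom_mul j
  calc A = A * (B * u) := by rw [hB, mul_one]
  _ = (A * u) * B := by ring
  _ = B := by rw [hA, one_mul]

lemma coeff_eps (S : Finset (Fin n)) (k : ℕ) :
    (PowerSeries.coeff k) (∏ i ∈ S, (1 - PowerSeries.C (R := MvPolynomial (Fin n) ℚ) (X i) * PowerSeries.X))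
      = (-1) ^ k * eS n S k := by
  classical
  induction S using Finset.induction_on generalizing k with
  | empty =>
    rw [Finset.prod_empty, eS_empty, PowerSeries.coeff_one]
    cases k <;> simp
  | @insert j S hj ih =>
    rw [Finset.prod_insert hj, show (1 - PowerSeries.C (R := MvPolynomial (Fin n) ℚ) (X j) * PowerSeries.X) *
        (∏ i ∈ S, (1 - PowerSeries.C (R := MvPolynomial (Fin n) ℚ) (X i) * PowerSeries.X))
      = (∏ i ∈ S, (1 - PowerSeries.C (R := MvPolynomial (Fin n) ℚ) (X i) * PowerSeries.X)) - PowerSeries.C (R := MvPolynomial (Fin n) ℚ) (X j) *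
        ((∏ i ∈ S, (1 - PowerSeries.C (R := MvPolynomial (Fin n) ℚ) (X i) * PowerSeries.X)) * PowerSeries.X) from by ring,
      map_sub, PowerSeries.coeff_C_mul]
    cases k with
    | zero =>
      rw [PowerSeries.coeff_zero_mul_X, ih, eS_zero, eS_zero]
      simp
    | succ k =>
      rw [PowerSeries.coeff_succ_mul_X, ih, ih, eS_insert hj]
      ring

lemma hInt_natCast (a : ℕ) : hInt n (a : ℤ) = hsymm (Fin n) ℚ a := by
  rw [hInt, if_pos (by positivity), Int.toNat_natCast]

lemma hInt_neg {z : ℤ} (h : z < 0) : hInt n z = 0 := if_neg (not_le.2 h)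

lemma F_lemma (j : Fin n) (m : ℕ) :
    ∑ k ∈ Finset.range n, hInt n ((m : ℤ) - k) * ((-1) ^ k * eS n (Finset.univ.erase j) k)
      = X j ^ m := by
  set G : ℕ → MvPolynomial (Fin n) ℚ :=
    fun k => hInt n ((m : ℤ) - k) * ((-1) ^ k * eS n (Finset.univ.erase j) k) with hG
  have h0 : (PowerSeries.coeff m)
      ((∏ i ∈ Finset.univ.erase j, (1 - PowerSeries.C (R := MvPolynomial (Fin n) ℚ) (X i)
        * PowerSeries.X)) * PowerSeries.mk (hS n Finset.univ)) = X j ^ m := by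
    rw [mul_comm, hps_erase j, PowerSeries.coeff_mk]
  rw [PowerSeries.coeff_mul, Finset.Nat.sum_antidiagonal_eq_sum_range_succ_mk] at h0
  have e1 : ∑ k ∈ Finset.range (m + 1), G k = X j ^ m := by
    rw [← h0]
    refine Finset.sum_congr rfl fun k hk => ?_
    have hk' : k ≤ m := by simpa [Nat.lt_succ_iff] using hk
    rw [coeff_eps, PowerSeries.coeff_mk]
    simp only [hG]
    have : ((m : ℤ) - k) = ((m - k : ℕ) : ℤ) := by
      have := Nat.cast_sub (R := ℤ) hk'
      omega
    rw [this, hInt_natCast, hS_univ]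
    ring
  set N := max n (m + 1) with hN
  have e2 : ∑ k ∈ Finset.range N, G k = ∑ k ∈ Finset.range (m + 1), G k := by
    refine (Finset.sum_subset (Finset.range_subset_range.2 (le_max_right _ _)) fun k _ hk => ?_).symm
    have hk' : m + 1 ≤ k := by simpa [Nat.lt_succ_iff] using fun h => hk (Finset.mem_range.2 h)
    simp only [hG]
    rw [hInt_neg (by omega), zero_mul]
  have e3 : ∑ k ∈ Finset.range N, G k = ∑ k ∈ Finset.range n, G k := by
    refine (Finset.sum_subset (Finset.range_subset_range.2 (le_max_left _ _)) fun k _ hk => ?_).symm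
    have hk' : n ≤ k := by simpa using fun h => hk (Finset.mem_range.2 h)
    have hcard : (Finset.univ.erase j).card < k := by
      rw [Finset.card_erase_of_mem (Finset.mem_univ j), Finset.card_univ, Fintype.card_fin]
      have : 0 < n := Fin.pos_iff_nonempty.2 ⟨j⟩
      omega
    simp only [hG]
    rw [eS_card_lt hcard, mul_zero, mul_zero]
  rw [← e3, e2, e1]

lemma row_lemma (j : Fin n) (m : ℕ) (c : ℤ) (hc : c = (m : ℤ) - ((n - 1 : ℕ) : ℤ)) :
    ∑ k : Fin n, hInt n (c + (k : ℤ)) *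
      ((-1) ^ ((n - 1) - (k : ℕ)) * eS n (Finset.univ.erase j) ((n - 1) - (k : ℕ)))
      = X j ^ m := by
  rw [← Equiv.sum_comp (Fin.revPerm : Equiv.Perm (Fin n))]
  have step : ∀ k : Fin n, hInt n (c + ((Fin.revPerm k : Fin n) : ℤ)) *
      ((-1) ^ ((n - 1) - ((Fin.revPerm k : Fin n) : ℕ))
        * eS n (Finset.univ.erase j) ((n - 1) - ((Fin.revPerm k : Fin n) : ℕ)))
      = hInt n ((m : ℤ) - (k : ℕ)) * ((-1) ^ (k : ℕ) * eS n (Finset.univ.erase j) (k : ℕ)) := by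
    intro k
    have hk : (k : ℕ) ≤ n - 1 := by have := k.isLt; omega
    have h1 : ((Fin.revPerm k : Fin n) : ℕ) = n - 1 - (k : ℕ) := by
      simp [Fin.revPerm, Fin.val_rev]; omega
    rw [h1]
    have h2 : (n - 1) - (n - 1 - (k : ℕ)) = (k : ℕ) := by omega
    have h3 : c + ((n - 1 - (k : ℕ) : ℕ) : ℤ) = (m : ℤ) - (k : ℕ) := by
      rw [hc]; omega
    rw [h2, h3]
  rw [Finset.sum_congr rfl fun k _ => step k, Fin.sum_univ_eq_sum_range
    (fun k => hInt n ((m : ℤ) - (k : ℕ)) * ((-1) ^ k * eS n (Finset.univ.erase j) k))]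
  exact F_lemma j m

lemma prod_pairs {M : Type*} [CommMonoid M] (f : Fin n × Fin n → M) :
    ∏ p ∈ (Finset.univ : Finset (Fin n × Fin n)).filter (fun p => p.1 < p.2), f p
      = ∏ i : Fin n, ∏ j ∈ Finset.Ioi i, f (i, j) := by
  rw [Finset.prod_sigma']
  refine Finset.prod_nbij' (fun p : Fin n × Fin n => (⟨p.1, p.2⟩ : (_ : Fin n) × Fin n))
    (fun p => (p.1, p.2)) ?_ ?_ ?_ ?_ ?_ <;> simp

end StmtAux

end

open StmtAux

theorem stmt6 (n : ℕ) (hn : 2 ≤ n) :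
    (∏ p ∈ (Finset.univ : Finset (Fin n × Fin n)).filter (fun p => p.1 < p.2),
        (X p.1 + X p.2)) = schur n (staircase n) := by
  classical
  set R := MvPolynomial (Fin n) ℚ
  set E : Matrix (Fin n) (Fin n) R := Matrix.of fun k j =>
    ((-1 : R)) ^ ((n - 1) - (k : ℕ)) * eS n (Finset.univ.erase j) ((n - 1) - (k : ℕ)) with hE
  set Hmat : Matrix (Fin n) (Fin n) R := Matrix.of fun i j : Fin n =>
    hInt n ((staircase n i : ℤ) - (i : ℤ) + (j : ℤ)) with hH
  set H0 : Matrix (Fin n) (Fin n) R := Matrix.of fun i j : Fin n =>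
    hInt n (- (i : ℤ) + (j : ℤ)) with hH0
  set w : Fin n → R := fun j => X j ^ 2 with hw
  -- the two matrix products
  have hME : Hmat * E = ((Matrix.vandermonde w).transpose).submatrix Fin.rev id := by
    refine Matrix.ext fun i j => ?_
    rw [Matrix.mul_apply]
    have hi : (i : ℕ) ≤ n - 1 := by have := i.isLt; omega
    have hc : ((staircase n i : ℕ) : ℤ) - (i : ℤ) =
        ((2 * ((n - 1) - (i : ℕ)) : ℕ) : ℤ) - ((n - 1 : ℕ) : ℤ) := by
      unfold staircase; omega
    have hrow := row_lemma (n := n) j (2 * ((n - 1) - (i : ℕ)))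
      (((staircase n i : ℕ) : ℤ) - (i : ℤ)) hc
    simp only [hE, hH, Matrix.of_apply, Matrix.submatrix_apply, Matrix.transpose_apply,
      Matrix.vandermonde_apply, id, hw]
    rw [hrow, Fin.val_rev, ← pow_mul]
    congr 1
    omega
  have hVE : H0 * E = ((Matrix.vandermonde X).transpose).submatrix Fin.rev id := by
    refine Matrix.ext fun i j => ?_
    rw [Matrix.mul_apply]
    have hi : (i : ℕ) ≤ n - 1 := by have := i.isLt; omega
    have hc : - (i : ℤ) = ((((n - 1) - (i : ℕ)) : ℕ) : ℤ) - ((n - 1 : ℕ) : ℤ) := by omega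
    have hrow := row_lemma (n := n) j ((n - 1) - (i : ℕ)) (- (i : ℤ)) hc
    simp only [hE, hH0, Matrix.of_apply, Matrix.submatrix_apply, Matrix.transpose_apply,
      Matrix.vandermonde_apply, id]
    rw [hrow, Fin.val_rev]
    congr 1
    omega
  -- determinant of H0 is 1
  have hdetH0 : H0.det = 1 := by
    rw [Matrix.det_of_upperTriangular]
    · refine Finset.prod_eq_one fun i _ => ?_
      simp only [hH0, Matrix.of_apply]
      rw [show (-(i : ℤ) + (i : ℤ)) = ((0 : ℕ) : ℤ) by omega, hInt_natCast, hsymm_zero]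
    · intro i j hij
      simp only [hH0, Matrix.of_apply]
      have hji : (j : ℕ) < (i : ℕ) := hij
      exact hInt_neg (by omega)
  -- sign bookkeeping
  set s : R := ((Equiv.Perm.sign (Fin.revPerm : Equiv.Perm (Fin n)) : ℤ) : R) with hs
  have hss : s * s = 1 := by
    rw [hs, ← Int.cast_mul, ← Units.val_mul, ← sq, Int.units_sq]
    simp
  have hdet1 : Hmat.det * E.det = s * (Matrix.vandermonde w).det := by
    rw [← Matrix.det_mul, hME]
    rw [show ((Matrix.vandermonde w).transpose).submatrix Fin.rev id
        = ((Matrix.vandermonde w).transpose).submatrix (Fin.revPerm : Equiv.Perm (Fin n)) id from rfl]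
    rw [Matrix.det_permute, Matrix.det_transpose]
  have hdet2 : E.det = s * (Matrix.vandermonde X).det := by
    have h := congrArg Matrix.det hVE
    rw [Matrix.det_mul, hdetH0, one_mul] at h
    rw [h, show ((Matrix.vandermonde X).transpose).submatrix Fin.rev id
        = ((Matrix.vandermonde X).transpose).submatrix (Fin.revPerm : Equiv.Perm (Fin n)) id from rfl,
      Matrix.det_permute, Matrix.det_transpose]
  -- combine
  have key : Hmat.det * (Matrix.vandermonde X).det = (Matrix.vandermonde w).det := by
    have h1 : Hmat.det * (s * (Matrix.vandermonde X).det) = s * (Matrix.vandermonde w).det := by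
      rw [← hdet2, hdet1]
    calc Hmat.det * (Matrix.vandermonde X).det
        = s * (s * (Hmat.det * (Matrix.vandermonde X).det)) := by
          rw [← mul_assoc, hss, one_mul]
      _ = s * (Hmat.det * (s * (Matrix.vandermonde X).det)) := by ring
      _ = s * (s * (Matrix.vandermonde w).det) := by rw [h1]
      _ = (Matrix.vandermonde w).det := by rw [← mul_assoc, hss, one_mul]
  rw [Matrix.det_vandermonde, Matrix.det_vandermonde] at key
  have hsplit : (∏ i : Fin n, ∏ j ∈ Finset.Ioi i, (w j - w i))
      = (∏ i : Fin n, ∏ j ∈ Finset.Ioi i, (X j - X i))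
        * (∏ i : Fin n, ∏ j ∈ Finset.Ioi i, ((X i + X j : R))) := by
    rw [← Finset.prod_mul_distrib]
    refine Finset.prod_congr rfl fun i _ => ?_
    rw [← Finset.prod_mul_distrib]
    refine Finset.prod_congr rfl fun j _ => ?_
    rw [hw]; ring
  rw [hsplit] at key
  have hVne : (∏ i : Fin n, ∏ j ∈ Finset.Ioi i, (X j - X i : R)) ≠ 0 := by
    refine Finset.prod_ne_zero_iff.2 fun i _ => Finset.prod_ne_zero_iff.2 fun j hj => ?_
    have hij : i ≠ j := by
      intro h; subst h; exact absurd (Finset.mem_Ioi.1 hj) (lt_irrefl _)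
    exact sub_ne_zero.2 fun h => hij (MvPolynomial.X_injective h.symm)
  have final : Hmat.det = ∏ i : Fin n, ∏ j ∈ Finset.Ioi i, ((X i + X j : R)) := by
    have h2 : Hmat.det * (∏ i : Fin n, ∏ j ∈ Finset.Ioi i, (X j - X i : R))
        = (∏ i : Fin n, ∏ j ∈ Finset.Ioi i, ((X i + X j : R)))
          * (∏ i : Fin n, ∏ j ∈ Finset.Ioi i, (X j - X i : R)) := by
      rw [key]; ring
    exact mul_right_cancel₀ hVne h2
  rw [prod_pairs (fun p : Fin n × Fin n => (X p.1 + X p.2 : R))]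
  rw [show schur n (staircase n) = Hmat.det from rfl, final]
end

section
/- The coefficient of the squarefree monomial x_1·x_2···x_n in ∏_{i=1}^{n} ((x_1 + ⋯ + x_n) + x_i) equals ∑_{k=0}^{n} n!/k!. -/
open MvPolynomial

private lemma support_sum_single {n : ℕ} (u : Finset (Fin n)) :
    (∑ i ∈ u, Finsupp.single i 1 : Fin n →₀ ℕ).support = u := by
  classical
  rw [Finsupp.support_sum_eq_biUnion]
  · simp [Finsupp.support_single_ne_zero]
  · intro i j hij
    simp only [Finsupp.support_single_ne_zero _ one_ne_zero]
    exact Finset.disjoint_singleton.mpr hij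

private lemma coeff_sum_pow {n : ℕ} :
    ∀ m : ℕ, ∀ u : Finset (Fin n), u.card = m →
    MvPolynomial.coeff (∑ i ∈ u, Finsupp.single i 1)
      ((∑ j : Fin n, X j : MvPolynomial (Fin n) ℚ) ^ m) = (m.factorial : ℚ) := by
  classical
  intro m
  induction m with
  | zero =>
    intro u hu
    rw [Finset.card_eq_zero] at hu
    subst hu
    simp
  | succ m ih =>
    intro u hu
    rw [pow_succ, Finset.mul_sum]
    rw [MvPolynomial.coeff_sum]
    have hsupp := support_sum_single u
    calc ∑ j : Fin n, MvPolynomial.coeff (∑ i ∈ u, Finsupp.single i 1)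
          ((∑ j : Fin n, X j : MvPolynomial (Fin n) ℚ) ^ m * X j)
        = ∑ j ∈ u, (m.factorial : ℚ) := by
          rw [← Finset.sum_subset (Finset.subset_univ u)]
          · refine Finset.sum_congr rfl fun j hj => ?_
            rw [MvPolynomial.coeff_mul_X', hsupp, if_pos hj]
            have hd : (∑ i ∈ u, Finsupp.single i 1 : Fin n →₀ ℕ) - Finsupp.single j 1
                = ∑ i ∈ u.erase j, Finsupp.single i 1 := by
              rw [← Finset.add_sum_erase u _ hj, add_tsub_cancel_left]
            rw [hd]
            exact ih (u.erase j) (by rw [Finset.card_erase_of_mem hj, hu]; rfl)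
          · intro j _ hj
            rw [MvPolynomial.coeff_mul_X', hsupp, if_neg hj]
      _ = (Nat.factorial (m + 1) : ℚ) := by
          rw [Finset.sum_const, hu, Nat.factorial_succ]
          push_cast
          ring

private lemma prod_X_eq_monomial {n : ℕ} (s : Finset (Fin n)) :
    (∏ i ∈ s, X i : MvPolynomial (Fin n) ℚ)
      = MvPolynomial.monomial (∑ i ∈ s, Finsupp.single i 1) 1 := by
  classical
  induction s using Finset.induction with
  | empty => simp
  | insert _ _ h ih =>
    rw [Finset.prod_insert h, Finset.sum_insert h, ih, MvPolynomial.X,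
      MvPolynomial.monomial_mul, one_mul]

private lemma nat_sum : ∀ n : ℕ, (∑ t : Finset (Fin n), (t.card).factorial)
    = ∑ k ∈ Finset.range (n + 1), n.factorial / k.factorial := by
  intro n
  have h1 : (Finset.univ : Finset (Finset (Fin n)))
      = (Finset.univ : Finset (Fin n)).powerset := (Finset.powerset_univ).symm
  rw [h1, Finset.sum_powerset_apply_card]
  simp only [Finset.card_univ, Fintype.card_fin, smul_eq_mul]
  have h2 : ∀ j ∈ Finset.range (n + 1),
      n.factorial / (n - j).factorial = n.choose j * j.factorial := by
    intro j hj
    rw [Finset.mem_range, Nat.lt_succ_iff] at hj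
    refine Nat.div_eq_of_eq_mul_left (Nat.factorial_pos _) ?_
    rw [← Nat.choose_mul_factorial_mul_factorial hj]
  rw [← Finset.sum_congr rfl h2]
  have := Finset.sum_range_reflect (fun k => n.factorial / k.factorial) (n + 1)
  simp only [Nat.add_sub_cancel] at this
  rw [← this]

theorem stmt11 (n : ℕ) :
    MvPolynomial.coeff (∑ i : Fin n, Finsupp.single i 1)
        (∏ i : Fin n, ((∑ j : Fin n, X j) + X i) : MvPolynomial (Fin n) ℚ) =
      ((∑ k ∈ Finset.range (n + 1), n.factorial / k.factorial : ℕ) : ℚ) := by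
  classical
  rw [Fintype.prod_add]
  rw [MvPolynomial.coeff_sum]
  have key : ∀ t : Finset (Fin n),
      MvPolynomial.coeff (∑ i : Fin n, Finsupp.single i 1)
        ((∏ _i ∈ t, (∑ j : Fin n, X j : MvPolynomial (Fin n) ℚ)) * ∏ i ∈ tᶜ, X i)
      = ((t.card).factorial : ℚ) := by
    intro t
    rw [Finset.prod_const, prod_X_eq_monomial]
    have hd : (∑ i : Fin n, Finsupp.single i 1 : Fin n →₀ ℕ)
        = (∑ i ∈ t, Finsupp.single i 1) + ∑ i ∈ tᶜ, Finsupp.single i 1 :=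
      (Finset.sum_add_sum_compl t _).symm
    rw [hd, MvPolynomial.coeff_mul_monomial, mul_one]
    exact coeff_sum_pow t.card t rfl
  rw [Finset.sum_congr rfl fun t _ => key t, ← nat_sum]
  push_cast
  rfl
end

section
/- (Gessel–Viennot nonnegativity of binomial determinants) Let λ and μ be partitions, each padded with zeros to sequences (λ_1 ≥ … ≥ λ_n ≥ 0) and (μ_1 ≥ … ≥ μ_n ≥ 0) of length n, such that μ_i ≤ λ_i for all 1 ≤ i ≤ n. Then the binomial determinant d_{λ,μ} = det( binomial(λ_i + n − i, μ_j + n − j) )_{1 ≤ i,j ≤ n} is a nonnegative integer. -/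
open Matrix Finset

/-- The `n × n` matrix `N_{j,i} = C(a_i, b_j)`. -/
def Nmat {n : ℕ} (a b : Fin n → ℕ) : Matrix (Fin n) (Fin n) ℤ :=
  Matrix.of fun j i => ((a i).choose (b j) : ℤ)

lemma det_col0 {n : ℕ} (M : Matrix (Fin (n+1)) (Fin (n+1)) ℤ)
    (h : ∀ j, j ≠ 0 → M j 0 = 0) :
    M.det = M 0 0 * (M.submatrix Fin.succ Fin.succ).det := by
  rw [Matrix.det_succ_column_zero]
  rw [Finset.sum_eq_single 0]
  · have hs : (0 : Fin (n+1)).succAbove = Fin.succ := funext fun i => rfl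
    simp [hs]
  · intro j _ hj
    rw [h j hj]
    ring
  · simp

lemma key : ∀ (K n : ℕ) (a b : Fin n → ℕ), StrictMono a → StrictMono b →
    (∑ i, a i) + n ≤ K → 0 ≤ (Nmat a b).det := by
  intro K
  induction K with
  | zero =>
    intro n a b _ _ hm
    have hn : n = 0 := by omega
    subst hn
    simp [Matrix.det_fin_zero]
  | succ K IH =>
    intro n a b ha hb hm
    match n with
    | 0 => simp [Matrix.det_fin_zero]
    | Nat.succ n =>
      by_cases h0 : a 0 = 0
      · by_cases hb0 : b 0 = 0
        · rw [det_col0]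
          · have h00 : Nmat a b 0 0 = 1 := by simp [Nmat, h0, hb0]
            have hsub : (Nmat a b).submatrix Fin.succ Fin.succ
                = Nmat (a ∘ Fin.succ) (b ∘ Fin.succ) := rfl
            rw [h00, hsub, one_mul]
            apply IH
            · exact ha.comp (fun i j hij => Fin.succ_lt_succ_iff.mpr hij)
            · exact hb.comp (fun i j hij => Fin.succ_lt_succ_iff.mpr hij)
            · have hs := Fin.sum_univ_succ a
              have hm' : (∑ i : Fin (n+1), a i) + (n+1) ≤ K + 1 := hm
              simp only [Function.comp]
              omega
          · intro j hj
            have hbj : 1 ≤ b j := by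
              have : b 0 < b j := hb (Fin.pos_of_ne_zero hj)
              omega
            have : Nat.choose (a 0) (b j) = 0 := by
              rw [h0]; exact Nat.choose_eq_zero_of_lt (by omega)
            simp [Nmat, this]
        · apply le_of_eq
          symm
          apply Matrix.det_eq_zero_of_column_eq_zero 0
          intro j
          have hbj : 1 ≤ b j := by
            have : b 0 ≤ b j := hb.monotone (Fin.zero_le j)
            omega
          have : Nat.choose (a 0) (b j) = 0 := by
            rw [h0]; exact Nat.choose_eq_zero_of_lt (by omega)
          simp [Nmat, this]
      · -- all `a i ≥ 1`: Pascal split of each row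
        have ha1 : ∀ i, 1 ≤ a i := by
          intro i
          have h1 : 1 ≤ a 0 := Nat.one_le_iff_ne_zero.mpr h0
          have h2 : a 0 ≤ a i := ha.monotone (Fin.zero_le i)
          omega
        set a' : Fin (n+1) → ℕ := fun i => a i - 1 with ha'def
        set x : Fin (n+1) → (Fin (n+1) → ℤ) :=
          fun j => fun i => ((a' i).choose (b j) : ℤ) with hxdef
        set y : Fin (n+1) → (Fin (n+1) → ℤ) :=
          fun j => if b j = 0 then 0 else fun i => ((a' i).choose (b j - 1) : ℤ) with hydef
        have hxy : (Nmat a b : Matrix (Fin (n+1)) (Fin (n+1)) ℤ) = x + y := by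
          funext j i
          show ((a i).choose (b j) : ℤ) = x j i + y j i
          rcases Nat.eq_zero_or_pos (b j) with hbj | hbj
          · simp [hxdef, hydef, hbj]
          · have h1i := ha1 i
            have hai : a i = a' i + 1 := by simp only [ha'def]; omega
            have hbj' : b j = (b j - 1) + 1 := by omega
            rw [hai, hbj', Nat.choose_succ_succ]
            have : y j i = ((a' i).choose (b j - 1) : ℤ) := by
              simp only [hydef]
              rw [if_neg (by omega : ¬ b j = 0)]
            rw [this]
            simp [hxdef]
            push_cast
            rw [← hbj']
            ring
        have hdet : (Nmat a b).det
            = ∑ s : Finset (Fin (n+1)),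
                Matrix.detRowAlternating (s.piecewise x y) := by
          show Matrix.detRowAlternating (Nmat a b) = _
          rw [hxy]
          exact Matrix.detRowAlternating.toMultilinearMap.map_add_univ x y
        rw [hdet]
        apply Finset.sum_nonneg
        intro s _
        by_cases hz : ∃ j, j ∉ s ∧ b j = 0
        · obtain ⟨j, hjs, hbj⟩ := hz
          have hrow : s.piecewise x y j = 0 := by
            rw [Finset.piecewise_eq_of_notMem _ _ _ hjs]
            simp [hydef, hbj]
          have hzero : Matrix.detRowAlternating (s.piecewise x y) = 0 :=
            Matrix.detRowAlternating.toMultilinearMap.map_coord_zero j hrow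
          rw [hzero]
        · push_neg at hz
          set b' : Fin (n+1) → ℕ := fun j => if j ∈ s then b j else b j - 1 with hb'def
          have hpiece : s.piecewise x y = fun j => fun i => ((a' i).choose (b' j) : ℤ) := by
            funext j
            by_cases hj : j ∈ s
            · rw [Finset.piecewise_eq_of_mem _ _ _ hj]
              simp [hxdef, hb'def, hj]
            · rw [Finset.piecewise_eq_of_notMem _ _ _ hj]
              simp [hydef, hb'def, hj, hz j hj]
          have hmono : Monotone b' := by
            intro j1 j2 hj
            rcases eq_or_lt_of_le hj with h | h
            · rw [h]
            · have hbb : b j1 < b j2 := hb h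
              simp only [hb'def]
              split <;> split <;> omega
          by_cases hsm : StrictMono b'
          · rw [hpiece]
            have heq : (fun j => fun i => ((a' i).choose (b' j) : ℤ))
                = (Nmat a' b' : Matrix (Fin (n+1)) (Fin (n+1)) ℤ) := rfl
            rw [heq]
            have hsa : StrictMono a' := by
              intro i j hij
              have := ha hij
              have := ha1 i
              simp only [ha'def]
              omega
            apply IH _ a' b' hsa hsm
            have hsum : ∑ i, a i = (∑ i, a' i) + (n+1) := by
              have : ∀ i : Fin (n+1), a i = a' i + 1 := by
                intro i; have := ha1 i; simp [ha'def]; omega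
              calc ∑ i, a i = ∑ i : Fin (n+1), (a' i + 1) := Finset.sum_congr rfl fun i _ => this i
                _ = (∑ i, a' i) + (n+1) := by
                    rw [Finset.sum_add_distrib]
                    simp
            have hm' : (∑ i : Fin (n+1), a i) + (n+1) ≤ K + 1 := hm
            omega
          · rw [StrictMono] at hsm
            push_neg at hsm
            obtain ⟨j1, j2, hlt, hle⟩ := hsm
            have heq : b' j1 = b' j2 := le_antisymm (hmono hlt.le) hle
            apply le_of_eq
            symm
            rw [hpiece]
            refine Matrix.detRowAlternating.map_eq_zero_of_eq _ ?_ (ne_of_lt hlt)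
            rw [heq]

theorem stmt14 (n : ℕ) (lam mu : Fin n → ℕ) (hlam : Antitone lam) (hmu : Antitone mu)
    (hsub : ∀ i, mu i ≤ lam i) :
    0 ≤ binomDet n lam mu := by
  set a : Fin n → ℕ := fun i => lam (Fin.rev i) + (i : ℕ) with hadef
  set b : Fin n → ℕ := fun j => mu (Fin.rev j) + (j : ℕ) with hbdef
  have hrevanti : ∀ i j : Fin n, i < j → Fin.rev j < Fin.rev i := by
    intro i j hij
    rw [Fin.lt_def] at *
    simp only [Fin.val_rev]
    omega
  have ha : StrictMono a := by
    intro i j hij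
    have h1 : lam (Fin.rev i) ≤ lam (Fin.rev j) := hlam (le_of_lt (hrevanti i j hij))
    simp only [hadef]
    have := (Fin.lt_def).mp hij
    omega
  have hb : StrictMono b := by
    intro i j hij
    have h1 : mu (Fin.rev i) ≤ mu (Fin.rev j) := hmu (le_of_lt (hrevanti i j hij))
    simp only [hbdef]
    have := (Fin.lt_def).mp hij
    omega
  have hM : binomDet n lam mu = ((Nmat a b).transpose.submatrix Fin.rev Fin.rev).det := by
    unfold binomDet
    congr 1
    ext i j
    simp only [Matrix.of_apply, Matrix.submatrix_apply, Matrix.transpose_apply, Nmat, hadef,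
      hbdef, Fin.rev_rev]
    congr 2 <;> (simp only [Fin.val_rev]; omega)
  rw [hM]
  have hsub' : (Nmat a b).transpose.submatrix Fin.rev Fin.rev
      = (Nmat a b).transpose.submatrix (Fin.revPerm : Fin n ≃ Fin n) (Fin.revPerm : Fin n ≃ Fin n) := rfl
  rw [hsub', Matrix.det_submatrix_equiv_self, Matrix.det_transpose]
  exact key ((∑ i, a i) + n) n a b ha hb le_rfl
end
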